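/- arXiv:0710.3687 — 3 statements merged into one kernel-verified Lean document; each statement's English description precedes it below -/
import Mathlib

section
/- Let ψ : ℝ → ℝ be measurable with ∫_{−∞}^{∞} |ψ(x)·x| dx < ∞ and ∫_{−1}^{1} |ψ(x)| dx < ∞, and let ψ̌(t) = ∫_{−∞}^{t} e^{−(t−u)} ψ(u) du. Then ∫_{−∞}^{∞} |ψ̌(x)·x| dx < ∞. -/
open MeasureTheory Set Real ContinuousLinearMap
open scoped Convolution

/-!
On `ℝ`, `ψ̌` is the convolution `ψ ⋆ g` with the one-sided kernel `g s = e^{-s} 1_{s ≥ 0}`.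
Splitting the weight as `x = u + (x - u)` gives
`(ψ ⋆ g)(x) · x = ((u ↦ ψ u · u) ⋆ g)(x) + (ψ ⋆ (s ↦ s · g s))(x)`,
and both terms are convolutions of integrable functions: `u ↦ ψ u · u` by assumption, `ψ`
because `|ψ u| ≤ |ψ u · u|` off `[-1, 1]`, and `g`, `s ↦ s · g s` as Gamma-type integrands.
-/

lemma integrable_of_integrable_mul_id_of_integrableOn_Icc {ψ : ℝ → ℝ}
    (h1 : Integrable (fun x => ψ x * x)) (h2 : IntegrableOn ψ (Icc (-1) 1)) :
    Integrable ψ := by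
  have hcompl : IntegrableOn ψ (Icc (-1) 1)ᶜ := by
    have hmeas : AEStronglyMeasurable ψ (volume.restrict (Icc (-1) 1)ᶜ) := by
      refine (h1.restrict.aestronglyMeasurable.mul
        (measurable_inv.aestronglyMeasurable)).congr ?_
      filter_upwards [ae_restrict_mem measurableSet_Icc.compl] with x hx
      have hx0 : x ≠ 0 := fun h => hx ⟨by linarith, by linarith⟩
      simp [hx0]
    refine h1.restrict.mono hmeas ?_
    filter_upwards [ae_restrict_mem measurableSet_Icc.compl] with x hx
    have hx1 : 1 ≤ |x| := by
      simp only [mem_compl_iff, mem_Icc, ← abs_le, not_le] at hx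
      exact hx.le
    rw [norm_eq_abs, norm_eq_abs, abs_mul]
    exact le_mul_of_one_le_right (abs_nonneg _) hx1
  rw [← integrableOn_univ, ← union_compl_self (Icc (-1 : ℝ) 1)]
  exact h2.union hcompl

lemma convolution_mul_mul_id_eq_add {f g : ℝ → ℝ} {x : ℝ}
    (hf : ConvolutionExistsAt (fun u => f u * u) g x (mul ℝ ℝ))
    (hg : ConvolutionExistsAt f (fun s => s * g s) x (mul ℝ ℝ)) :
    (f ⋆[mul ℝ ℝ] g) x * x =
      ((fun u => f u * u) ⋆[mul ℝ ℝ] g) x + (f ⋆[mul ℝ ℝ] fun s => s * g s) x := by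
  have hsum := integral_add hf.integrable hg.integrable
  simp only [mul_apply'] at hsum
  simp only [convolution_mul, ← integral_mul_const, ← hsum]
  congr 1 with u
  ring

lemma MeasureTheory.Integrable.convolution_mul_id {f g : ℝ → ℝ}
    (hfx : Integrable fun u => f u * u) (hf : Integrable f) (hg : Integrable g)
    (hgx : Integrable fun s => s * g s) :
    Integrable fun x => (f ⋆[mul ℝ ℝ] g) x * x := by
  refine ((hfx.integrable_convolution (mul ℝ ℝ) hg).add
    (hf.integrable_convolution (mul ℝ ℝ) hgx)).congr ?_
  filter_upwards [hfx.ae_convolution_exists (mul ℝ ℝ) hg,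
    hf.ae_convolution_exists (mul ℝ ℝ) hgx] with x hfx hgx
  exact (convolution_mul_mul_id_eq_add hfx hgx).symm

noncomputable def expKernel : ℝ → ℝ := (Ici 0).indicator fun s => exp (-s)

lemma integrable_expKernel : Integrable expKernel := by
  rw [expKernel, integrable_indicator_iff measurableSet_Ici,
    integrableOn_Ici_iff_integrableOn_Ioi]
  simpa using exp_neg_integrableOn_Ioi 0 one_pos

lemma integrable_mul_expKernel : Integrable fun s => s * expKernel s := by
  have hind : (fun s => s * expKernel s) = (Ici 0).indicator fun s => s * exp (-s) := by
    ext s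
    by_cases hs : s ∈ Ici (0 : ℝ) <;> simp [expKernel, hs]
  rw [hind, integrable_indicator_iff measurableSet_Ici, integrableOn_Ici_iff_integrableOn_Ioi]
  refine (GammaIntegral_convergent two_pos).congr_fun (fun s _ => ?_) measurableSet_Ioi
  norm_num [mul_comm]

lemma setIntegral_Iic_exp_mul_eq_convolution (ψ : ℝ → ℝ) (x : ℝ) :
    ∫ u in Iic x, exp (-(x - u)) * ψ u = (ψ ⋆[mul ℝ ℝ] expKernel) x := by
  rw [convolution_mul, ← integral_indicator measurableSet_Iic]
  congr 1 with u
  by_cases hu : u ≤ x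
  · simp [expKernel, hu, mul_comm]
  · simp [expKernel, hu, not_le.mpr (sub_neg.mpr (not_le.mp hu))]

theorem stmt_4_general (ψ : ℝ → ℝ)
    (h1 : Integrable (fun x => ψ x * x))
    (h2 : IntegrableOn ψ (Set.Icc (-1 : ℝ) 1)) :
    Integrable (fun x => (∫ u in Set.Iic x, Real.exp (-(x - u)) * ψ u) * x) := by
  simp only [setIntegral_Iic_exp_mul_eq_convolution]
  exact h1.convolution_mul_id (integrable_of_integrable_mul_id_of_integrableOn_Icc h1 h2)
    integrable_expKernel integrable_mul_expKernel

theorem stmt_4 (ψ : ℝ → ℝ) (hmeas : Measurable ψ)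
    (h1 : Integrable (fun x => ψ x * x))
    (h2 : IntegrableOn ψ (Set.Icc (-1 : ℝ) 1)) :
    Integrable (fun x => (∫ u in Set.Iic x, Real.exp (-(x - u)) * ψ u) * x) :=
  stmt_4_general ψ h1 h2
end

section
/- Let μ be a probability measure on ℝ × ℝ⁺ (pairs (b,a)) and ν a Radon measure on ℝ invariant under the affine action, i.e., ν(f) = ∫∫ f(as + b) dν(s) dμ(b,a) for all nonnegative measurable f. Fix 0 < α < β and define f(x) = ν((α e^x, β e^x]) and μ̄ the image of the second-coordinate marginal of μ under a ↦ −log a. Then f satisfies the Poisson equation μ̄ ∗ f(x) = f(x) + ψ(x) for all x ∈ ℝ, where ψ(x) = ∫ [ν((α e^x/a, β e^x/a]) − ν(((α e^x − b)/a, (β e^x − b)/a])] dμ(b,a) and (μ̄ ∗ f)(x) = ∫ f(x+y) dμ̄(y). -/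
open MeasureTheory
open scoped ENNReal

theorem stmt_12 (μ : Measure (ℝ × ℝ)) [IsProbabilityMeasure μ]
    (hpos : ∀ᵐ p ∂μ, 0 < p.2)
    (ν : Measure ℝ) [IsLocallyFiniteMeasure ν]
    (hinv : ∀ g : ℝ → ℝ≥0∞, Measurable g →
      ∫⁻ p, ∫⁻ s, g (p.2 * s + p.1) ∂ν ∂μ = ∫⁻ s, g s ∂ν)
    (α β : ℝ) (hα : 0 < α) (hαβ : α < β)
    (F ψ : ℝ → ℝ)
    (hF : ∀ x, F x = (ν (Set.Ioc (α * Real.exp x) (β * Real.exp x))).toReal)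
    (hψ : ∀ x, ψ x = ∫ p : ℝ × ℝ,
      ((ν (Set.Ioc (α * Real.exp x / p.2) (β * Real.exp x / p.2))).toReal -
       (ν (Set.Ioc ((α * Real.exp x - p.1) / p.2) ((β * Real.exp x - p.1) / p.2))).toReal) ∂μ)
    (μbar : Measure ℝ) (hμbar : μbar = Measure.map (fun p : ℝ × ℝ => -Real.log p.2) μ)
    (hFint : ∀ x, Integrable (fun y => F (x + y)) μbar)
    (hψint : ∀ x, Integrable (fun p : ℝ × ℝ =>
      (ν (Set.Ioc (α * Real.exp x / p.2) (β * Real.exp x / p.2))).toReal -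
      (ν (Set.Ioc ((α * Real.exp x - p.1) / p.2) ((β * Real.exp x - p.1) / p.2))).toReal) μ) :
    ∀ x : ℝ, ∫ y, F (x + y) ∂μbar = F x + ψ x := by
  intro x
  subst hμbar
  have hfin : ∀ u v : ℝ, ν (Set.Ioc u v) ≠ ∞ := fun u v =>
    (lt_of_le_of_lt (measure_mono Set.Ioc_subset_Icc_self) isCompact_Icc.measure_lt_top).ne
  have hfmeas : Measurable fun p : ℝ × ℝ => -Real.log p.2 :=
    (Real.measurable_log.comp measurable_snd).neg
  set G : ℝ × ℝ → ℝ := fun p =>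
    (ν (Set.Ioc (α * Real.exp x / p.2) (β * Real.exp x / p.2))).toReal with hG
  set H : ℝ × ℝ → ℝ := fun p =>
    (ν (Set.Ioc ((α * Real.exp x - p.1) / p.2) ((β * Real.exp x - p.1) / p.2))).toReal with hHdef
  -- step 1: LHS = ∫ G
  have hmapint : Integrable (fun p : ℝ × ℝ => F (x + -Real.log p.2)) μ := by
    have h := hFint x
    rw [integrable_map_measure h.aestronglyMeasurable hfmeas.aemeasurable] at h
    exact h
  have hGeq : ∀ᵐ p ∂μ, F (x + -Real.log p.2) = G p := by
    filter_upwards [hpos] with p hp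
    have he : Real.exp (x + -Real.log p.2) = Real.exp x / p.2 := by
      rw [Real.exp_add, Real.exp_neg, Real.exp_log hp, div_eq_mul_inv]
    rw [hF, hG, he, ← mul_div_assoc, ← mul_div_assoc]
  have hLHS : ∫ y, F (x + y) ∂(Measure.map (fun p : ℝ × ℝ => -Real.log p.2) μ)
      = ∫ p, G p ∂μ := by
    rw [integral_map hfmeas.aemeasurable (hFint x).aestronglyMeasurable]
    exact integral_congr_ae hGeq
  have hGint : Integrable G μ := hmapint.congr hGeq
  have hGHint : Integrable (fun p => G p - H p) μ := hψint x
  have hHint : Integrable H μ := by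
    have : Integrable (fun p => G p - (G p - H p)) μ := hGint.sub hGHint
    exact this.congr (Filter.Eventually.of_forall fun p => by ring)
  -- step 2: ∫ H = F x
  set g : ℝ → ℝ≥0∞ := (Set.Ioc (α * Real.exp x) (β * Real.exp x)).indicator 1 with hg
  have hgmeas : Measurable g := measurable_one.indicator measurableSet_Ioc
  have hinner : ∀ᵐ p ∂μ, ∫⁻ s, g (p.2 * s + p.1) ∂ν
      = ν (Set.Ioc ((α * Real.exp x - p.1) / p.2) ((β * Real.exp x - p.1) / p.2)) := by
    filter_upwards [hpos] with p hp
    have hset : (fun s : ℝ => g (p.2 * s + p.1)) =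
        (Set.Ioc ((α * Real.exp x - p.1) / p.2) ((β * Real.exp x - p.1) / p.2)).indicator 1 := by
      funext s
      have hmem : p.2 * s + p.1 ∈ Set.Ioc (α * Real.exp x) (β * Real.exp x) ↔
          s ∈ Set.Ioc ((α * Real.exp x - p.1) / p.2) ((β * Real.exp x - p.1) / p.2) := by
        simp only [Set.mem_Ioc, div_lt_iff₀ hp, le_div_iff₀ hp]
        constructor <;> rintro ⟨h1, h2⟩ <;> constructor <;> nlinarith
      classical
      simp only [hg, Set.indicator_apply, Pi.one_apply, hmem]
    rw [hset, lintegral_indicator measurableSet_Ioc]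
    simp
  have hlint : ∫⁻ p, ν (Set.Ioc ((α * Real.exp x - p.1) / p.2)
      ((β * Real.exp x - p.1) / p.2)) ∂μ = ν (Set.Ioc (α * Real.exp x) (β * Real.exp x)) := by
    rw [show ν (Set.Ioc (α * Real.exp x) (β * Real.exp x)) = ∫⁻ s, g s ∂ν from by
        rw [hg, lintegral_indicator_one measurableSet_Ioc],
      ← hinv g hgmeas]
    exact lintegral_congr_ae (hinner.mono fun p h => h.symm)
  have hHF : ∫ p, H p ∂μ = F x := by
    rw [integral_eq_lintegral_of_nonneg_ae
        (Filter.Eventually.of_forall fun p => ENNReal.toReal_nonneg)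
        hHint.aestronglyMeasurable]
    have : ∀ p : ℝ × ℝ, ENNReal.ofReal (H p)
        = ν (Set.Ioc ((α * Real.exp x - p.1) / p.2) ((β * Real.exp x - p.1) / p.2)) :=
      fun p => ENNReal.ofReal_toReal (hfin _ _)
    rw [lintegral_congr fun p => this p, hlint, hF]
  -- conclude
  rw [hLHS, hψ]
  have hsplit : ∫ p, (G p - H p) ∂μ = ∫ p, G p ∂μ - ∫ p, H p ∂μ :=
    integral_sub hGint hHint
  rw [hsplit, hHF]
  ring
end

section
/- Let (X_i) be i.i.d. real-valued random variables with 𝔼X₁ = 0 and X₁ not a.s. zero, S_n = X₁ + ⋯ + X_n, and T = min{n ≥ 1 : S_n > 0}. Then for every γ > 0, 𝔼[∑_{n=1}^{T−1} e^{γ S_n}] < ∞. -/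
/-!
Call `n` a (weak descending) ladder epoch of the walk if `S n ≤ S k` for all `k ≤ n`.
Reversing the order of the first `n` increments preserves their joint law and `S n`, and
turns the event `{S 1, …, S n ≤ 0} = {n < T}` into `{n is a ladder epoch}`. Hence the
expectation is at most `∑ n, c n` with `c n = 𝔼[exp (γ S n); n is a ladder epoch]`.
Splitting at the first ladder epoch `τ ≥ 1` and using independence of the increments gives
the renewal equation `c (n + 1) = ∑ f (m + 1) * c (n - m)` with `f m = 𝔼[exp (γ S m); τ = m]`,
and since `c n ≤ 1` this forces `∑ c n ≤ (1 - ∑ f m)⁻¹`. Finally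
`∑ f m = 𝔼[exp (γ S τ); τ < ∞] < 1`: always `S τ ≤ 0`, and `S τ = X 0 < 0` with positive
probability because `X 0` is centred and not a.s. zero.
-/

open MeasureTheory ProbabilityTheory Finset Function Filter
open scoped ENNReal

lemma ENNReal.le_inv_one_sub_of_le_one_add_mul {a r : ℝ≥0∞} (ha : a ≠ ∞)
    (h : a ≤ 1 + r * a) : a ≤ (1 - r)⁻¹ := by
  rcases le_or_gt 1 r with hr | hr
  · simp [tsub_eq_zero_of_le hr]
  rw [ENNReal.le_inv_iff_mul_le, ENNReal.mul_sub fun _ _ => ha, mul_one, tsub_le_iff_right,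
    mul_comm]
  exact h

lemma ENNReal.tsum_le_inv_one_sub_of_le_convolution {c f : ℕ → ℝ≥0∞} (hc : ∀ n, c n ≠ ∞)
    (hc0 : c 0 ≤ 1) (hrec : ∀ n, c (n + 1) ≤ ∑ i ∈ range (n + 1), f i * c (n - i)) :
    ∑' n, c n ≤ (1 - ∑' n, f n)⁻¹ := by
  rw [ENNReal.tsum_eq_iSup_nat' (tendsto_add_atTop_nat 1)]
  refine iSup_le fun N => ENNReal.le_inv_one_sub_of_le_one_add_mul
    (ENNReal.sum_ne_top.2 fun n _ => hc n) ?_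
  set C := ∑ n ∈ range (N + 1), c n
  calc C = c 0 + ∑ n ∈ range N, c (n + 1) := (sum_range_succ' c N).trans (add_comm _ _)
    _ ≤ 1 + ∑ n ∈ range N, ∑ i ∈ range (n + 1), f i * c (n - i) :=
        add_le_add hc0 (sum_le_sum fun n _ => hrec n)
    _ = 1 + ∑ i ∈ range N, f i * ∑ k ∈ range (N - i), c k := by
        simp_rw [sum_range_diag_flip N (fun i k => f i * c k), mul_sum]
    _ ≤ 1 + ∑ i ∈ range N, f i * C := by
        gcongr with i hi
        exact sum_le_sum_of_subset (range_subset_range.2 (by omega))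
    _ ≤ 1 + (∑' n, f n) * C := by
        rw [← sum_mul]
        gcongr
        exact ENNReal.sum_le_tsum _

lemma measure_neg_ne_zero_of_integral_eq_zero {Ω : Type*} [MeasurableSpace Ω] {μ : Measure Ω}
    {f : Ω → ℝ} (hint : Integrable f μ) (hmean : ∫ ω, f ω ∂μ = 0) (hnz : ¬ f =ᵐ[μ] 0) :
    μ {ω | f ω < 0} ≠ 0 := fun h =>
  hnz <| (integral_eq_zero_iff_of_nonneg_ae (ae_iff.2 (by simpa using h)) hint).1 hmean

namespace RandomWalk

variable {n m j : ℕ}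

/-- For `k ≥ n` this is the total sum. -/
def partialSum (x : Fin n → ℝ) (k : ℕ) : ℝ := ∑ i : Fin n with i.val < k, x i

@[simp] lemma partialSum_zero (x : Fin n → ℝ) : partialSum x 0 = 0 := by
  simp [partialSum]

lemma partialSum_self (x : Fin n → ℝ) : partialSum x n = ∑ i, x i := by
  rw [partialSum, filter_true_of_mem fun i _ => i.isLt]

lemma partialSum_append_of_le (y : Fin m → ℝ) (z : Fin j → ℝ) {k : ℕ} (hk : k ≤ m) :
    partialSum (Fin.append y z) k = partialSum y k := by
  simp only [partialSum, sum_filter, Fin.sum_univ_add, Fin.append_left, Fin.append_right,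
    Fin.val_castAdd, Fin.val_natAdd, add_eq_left]
  exact sum_eq_zero fun i _ => if_neg (by omega)

lemma partialSum_append_add (y : Fin m → ℝ) (z : Fin j → ℝ) (k : ℕ) :
    partialSum (Fin.append y z) (m + k) = partialSum y m + partialSum z k := by
  simp only [partialSum, sum_filter, Fin.sum_univ_add, Fin.append_left, Fin.append_right,
    Fin.val_castAdd, Fin.val_natAdd, add_lt_add_iff_left]
  congr 1
  exact sum_congr rfl fun i _ => by simp [i.isLt, show (i : ℕ) < m + k by omega]

lemma partialSum_rev (x : Fin n → ℝ) (k : ℕ) :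
    partialSum (fun i => x i.rev) k = partialSum x n - partialSum x (n - k) := by
  rw [partialSum_self, eq_sub_iff_add_eq, partialSum, partialSum, add_comm,
    ← sum_filter_add_sum_filter_not univ (fun i : Fin n => i.val < n - k)]
  congr 1
  refine sum_equiv Fin.revPerm (fun i => ?_) (by simp)
  simp only [mem_filter, mem_univ, true_and, not_lt, tsub_le_iff_right, Fin.revPerm_apply,
    Fin.val_rev]
  omega

lemma partialSum_initialSegment (x : ℕ → ℝ) {k : ℕ} (hk : k ≤ n) :
    partialSum (fun i : Fin n => x i) k = ∑ i ∈ range k, x i := by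
  rw [partialSum, sum_filter, Fin.sum_univ_eq_sum_range (fun i => if i < k then x i else 0),
    ← sum_filter]
  congr 1
  ext i
  simp only [mem_filter, mem_range]
  omega

lemma measurable_partialSum (k : ℕ) : Measurable fun x : Fin n → ℝ => partialSum x k := by
  unfold partialSum
  fun_prop

/-! A vector `x : Fin n → ℝ` stands for the first `n` increments of the walk. Ladder epochs are
weak descending ones, and `nonposSet n` is the event `{n < T}`. -/

def ladderEpochSet (n : ℕ) : Set (Fin n → ℝ) :=
  {x | ∀ k ≤ n, partialSum x n ≤ partialSum x k}

def firstLadderEpochSet (m n : ℕ) : Set (Fin n → ℝ) :=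
  {x | (∀ k ∈ Set.Ico 1 m, 0 < partialSum x k) ∧ partialSum x m ≤ 0}

def nonposSet (n : ℕ) : Set (Fin n → ℝ) := {x | ∀ k ∈ Set.Icc 1 n, partialSum x k ≤ 0}

noncomputable def expWeight (γ : ℝ) (x : Fin n → ℝ) : ℝ≥0∞ :=
  ENNReal.ofReal (Real.exp (γ * partialSum x n))

lemma measurableSet_ladderEpochSet (n : ℕ) : MeasurableSet (ladderEpochSet n) := by
  simp only [ladderEpochSet, Set.ofPred_forall]
  exact .iInter fun k => .iInter fun _ =>
    measurableSet_le (measurable_partialSum n) (measurable_partialSum k)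

lemma measurableSet_firstLadderEpochSet (m n : ℕ) : MeasurableSet (firstLadderEpochSet m n) := by
  simp only [firstLadderEpochSet, Set.ofPred_and, Set.ofPred_forall]
  exact (MeasurableSet.iInter fun k => .iInter fun _ =>
    measurableSet_lt measurable_const (measurable_partialSum k)).inter
    (measurableSet_le (measurable_partialSum m) measurable_const)

lemma measurableSet_nonposSet (n : ℕ) : MeasurableSet (nonposSet n) := by
  simp only [nonposSet, Set.ofPred_forall]
  exact .iInter fun k => .iInter fun _ =>
    measurableSet_le (measurable_partialSum k) measurable_const

lemma measurable_expWeight (γ : ℝ) : Measurable (expWeight (n := n) γ) :=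
  (((measurable_partialSum n).const_mul γ).exp).ennreal_ofReal

lemma expWeight_le_one {γ : ℝ} (hγ : 0 ≤ γ) {x : Fin n → ℝ} (hx : partialSum x n ≤ 0) :
    expWeight γ x ≤ 1 :=
  ENNReal.ofReal_le_one.2 (Real.exp_le_one_iff.2 (mul_nonpos_of_nonneg_of_nonpos hγ hx))

lemma rev_preimage_nonposSet :
    (fun x : Fin n → ℝ => fun i => x i.rev) ⁻¹' nonposSet n = ladderEpochSet n := by
  ext x
  simp only [Set.mem_preimage, nonposSet, ladderEpochSet, Set.mem_ofPred_eq, Set.mem_Icc]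
  constructor
  · intro h k hk
    rcases hk.eq_or_lt with rfl | hk
    · exact le_rfl
    · have := h (n - k) ⟨by omega, by omega⟩
      rw [partialSum_rev, Nat.sub_sub_self hk.le] at this
      linarith
  · rintro h k -
    rw [partialSum_rev]
    linarith [h (n - k) (Nat.sub_le n k)]

lemma expWeight_rev (γ : ℝ) (x : Fin n → ℝ) :
    expWeight γ (fun i => x i.rev) = expWeight γ x := by
  rw [expWeight, expWeight, partialSum_rev, Nat.sub_self, partialSum_zero, sub_zero]

lemma expWeight_append (γ : ℝ) (y : Fin m → ℝ) (z : Fin j → ℝ) :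
    expWeight γ (Fin.append y z) = expWeight γ y * expWeight γ z := by
  rw [expWeight, expWeight, expWeight, partialSum_append_add, mul_add, Real.exp_add,
    ENNReal.ofReal_mul (Real.exp_nonneg _)]

lemma append_preimage_ladderEpochSet_inter_firstLadderEpochSet :
    (fun p : (Fin m → ℝ) × (Fin j → ℝ) => Fin.append p.1 p.2) ⁻¹'
        (ladderEpochSet (m + j) ∩ firstLadderEpochSet m (m + j)) =
      firstLadderEpochSet m m ×ˢ ladderEpochSet j := by
  ext ⟨y, z⟩
  simp only [Set.mem_preimage, Set.mem_inter_iff, Set.mem_prod, ladderEpochSet,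
    firstLadderEpochSet, Set.mem_ofPred_eq, Set.mem_Ico]
  have hy {k : ℕ} (hk : k ≤ m) := partialSum_append_of_le y z hk
  have hyz := partialSum_append_add y z
  constructor
  · rintro ⟨hlad, hpos, hnonpos⟩
    refine ⟨⟨fun k hk => by rw [← hy hk.2.le]; exact hpos k hk, by rwa [← hy le_rfl]⟩,
      fun k hk => ?_⟩
    have := hlad (m + k) (by omega)
    rw [hyz, hyz] at this
    linarith
  · rintro ⟨⟨hpos, hnonpos⟩, hlad⟩
    have hz : partialSum z j ≤ 0 := by simpa using hlad 0 (Nat.zero_le j)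
    refine ⟨fun k hk => ?_, fun k hk => by rw [hy hk.2.le]; exact hpos k hk,
      by rwa [hy le_rfl]⟩
    rw [hyz]
    rcases le_or_gt k m with hkm | hkm
    · rw [hy hkm]
      rcases hkm.eq_or_lt with rfl | hkm
      · linarith
      rcases Nat.eq_zero_or_pos k with rfl | hk0
      · rw [partialSum_zero]
        linarith
      · linarith [hpos k ⟨hk0, hkm⟩]
    · obtain ⟨k, rfl⟩ := Nat.exists_eq_add_of_lt hkm
      rw [add_assoc, hyz]
      linarith [hlad (k + 1) (by omega)]

lemma pairwise_disjoint_firstLadderEpochSet :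
    Pairwise (Disjoint on (fun i => firstLadderEpochSet (i + 1) n)) := by
  refine (pairwise_disjoint_on _).2 fun i i' hii' => Set.disjoint_left.2 fun x hx hx' => ?_
  linarith [hx.2, hx'.1 (i + 1) ⟨by omega, by omega⟩]

lemma ladderEpochSet_eq_biUnion (n : ℕ) :
    ladderEpochSet (n + 1) =
      ⋃ i ∈ range (n + 1), ladderEpochSet (n + 1) ∩ firstLadderEpochSet (i + 1) (n + 1) := by
  refine subset_antisymm (fun x hx => ?_) (Set.iUnion₂_subset fun _ _ => Set.inter_subset_left)
  have hend : partialSum x (n + 1) ≤ 0 := by simpa using hx 0 (Nat.zero_le _)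
  have hex : ∃ k, partialSum x (k + 1) ≤ 0 := ⟨n, hend⟩
  refine Set.mem_biUnion (x := Nat.find hex) (mem_range.2 ?_) ⟨hx, ?_, Nat.find_spec hex⟩
  · exact Nat.lt_succ_of_le (Nat.find_min' hex hend)
  · rintro k ⟨hk1, hk⟩
    obtain ⟨k, rfl⟩ := Nat.exists_eq_add_of_le' hk1
    exact lt_of_not_ge (Nat.find_min hex (by omega))

section Product

variable {α : Type*} [MeasurableSpace α] (ν : Measure α) [SigmaFinite ν]

lemma measurePreserving_finAppend (m j : ℕ) :
    MeasurePreserving (fun p : (Fin m → α) × (Fin j → α) => Fin.append p.1 p.2)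
      ((Measure.pi fun _ => ν).prod (Measure.pi fun _ => ν)) (Measure.pi fun _ => ν) := by
  convert (measurePreserving_piCongrLeft (fun _ => ν) finSumFinEquiv).comp
    (measurePreserving_sumPiEquivProdPi_symm fun _ => ν) with p
  ext i
  simp only [Function.comp_apply, MeasurableEquiv.coe_piCongrLeft,
    MeasurableEquiv.coe_sumPiEquivProdPi_symm]
  refine Fin.addCases (fun i => ?_) (fun i => ?_) i
  · rw [Fin.append_left, ← finSumFinEquiv_apply_left]
    exact (Equiv.piCongrLeft_sumInl (fun _ => α) finSumFinEquiv p.1 p.2 i).symm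
  · rw [Fin.append_right, ← finSumFinEquiv_apply_right]
    exact (Equiv.piCongrLeft_sumInr (fun _ => α) finSumFinEquiv p.1 p.2 i).symm

lemma measurePreserving_finRev (n : ℕ) :
    MeasurePreserving (fun x : Fin n → α => fun i : Fin n => x i.rev)
      (Measure.pi fun _ => ν) (Measure.pi fun _ => ν) := by
  convert measurePreserving_piCongrLeft (fun _ => ν) (Fin.revPerm (n := n)) with x i
  simpa [MeasurableEquiv.coe_piCongrLeft] using
    (Equiv.piCongrLeft_apply_apply (fun _ => α) Fin.revPerm x i.rev).symm

end Product

section Moments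

variable (ν : Measure ℝ) (γ : ℝ)

noncomputable def ladderMoment (n : ℕ) : ℝ≥0∞ :=
  ∫⁻ x in ladderEpochSet n, expWeight γ x ∂Measure.pi fun _ => ν

noncomputable def firstLadderMoment (m : ℕ) : ℝ≥0∞ :=
  ∫⁻ x in firstLadderEpochSet m m, expWeight γ x ∂Measure.pi fun _ => ν

lemma setLIntegral_nonposSet_eq_ladderMoment [SigmaFinite ν] (n : ℕ) :
    ∫⁻ x in nonposSet n, expWeight γ x ∂(Measure.pi fun _ => ν) = ladderMoment ν γ n := by
  rw [← (measurePreserving_finRev ν n).setLIntegral_comp_preimage (measurableSet_nonposSet n)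
    (measurable_expWeight γ), rev_preimage_nonposSet]
  simp only [expWeight_rev, ladderMoment]

lemma setLIntegral_ladderEpochSet_inter_firstLadderEpochSet [SigmaFinite ν] (m j : ℕ) :
    ∫⁻ x in ladderEpochSet (m + j) ∩ firstLadderEpochSet m (m + j), expWeight γ x
        ∂(Measure.pi fun _ => ν) = firstLadderMoment ν γ m * ladderMoment ν γ j := by
  rw [← (measurePreserving_finAppend ν m j).setLIntegral_comp_preimage
    ((measurableSet_ladderEpochSet _).inter (measurableSet_firstLadderEpochSet _ _))
    (measurable_expWeight γ), append_preimage_ladderEpochSet_inter_firstLadderEpochSet,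
    ← Measure.prod_restrict]
  simp only [expWeight_append]
  exact lintegral_prod_mul (measurable_expWeight γ).aemeasurable
    (measurable_expWeight γ).aemeasurable

lemma ladderMoment_succ [SigmaFinite ν] (n : ℕ) :
    ladderMoment ν γ (n + 1) =
      ∑ i ∈ range (n + 1), firstLadderMoment ν γ (i + 1) * ladderMoment ν γ (n - i) := by
  rw [ladderMoment, ladderEpochSet_eq_biUnion, lintegral_biUnion_finset
    (fun i _ i' _ hii' => (pairwise_disjoint_firstLadderEpochSet hii').mono
      Set.inter_subset_right Set.inter_subset_right)
    (fun i _ => (measurableSet_ladderEpochSet _).inter (measurableSet_firstLadderEpochSet _ _))]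
  refine sum_congr rfl fun i hi => ?_
  have hsplit := setLIntegral_ladderEpochSet_inter_firstLadderEpochSet ν γ (i + 1) (n - i)
  rwa [show i + 1 + (n - i) = n + 1 by have := mem_range.1 hi; omega] at hsplit

lemma ladderMoment_zero [IsProbabilityMeasure ν] : ladderMoment ν γ 0 = 1 := by
  have hlad : ladderEpochSet 0 = Set.univ := Set.eq_univ_of_forall fun x k hk => by
    rw [Nat.le_zero.1 hk]
  simp [ladderMoment, hlad, expWeight]

lemma ladderMoment_le_one [IsProbabilityMeasure ν] {γ : ℝ} (hγ : 0 ≤ γ) (n : ℕ) :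
    ladderMoment ν γ n ≤ 1 :=
  calc ladderMoment ν γ n ≤ ∫⁻ _ in ladderEpochSet n, 1 ∂(Measure.pi fun _ => ν) :=
        setLIntegral_mono measurable_const fun x hx =>
          expWeight_le_one hγ (by simpa using hx 0 (Nat.zero_le n))
    _ ≤ 1 := by simpa using prob_le_one

lemma tsum_ladderMoment_le [IsProbabilityMeasure ν] {γ : ℝ} (hγ : 0 ≤ γ) :
    ∑' n, ladderMoment ν γ n ≤ (1 - ∑' m, firstLadderMoment ν γ (m + 1))⁻¹ :=
  ENNReal.tsum_le_inv_one_sub_of_le_convolution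
    (fun n => (ladderMoment_le_one ν hγ n).trans_lt ENNReal.one_lt_top |>.ne)
    (ladderMoment_zero ν γ).le fun n => (ladderMoment_succ ν γ n).le

end Moments

section Sequence

variable (x : ℕ → ℝ)

lemma initialSegment_mem_firstLadderEpochSet_iff :
    (fun i : Fin m => x i) ∈ firstLadderEpochSet m m ↔
      (∀ k ∈ Set.Ico 1 m, 0 < ∑ i ∈ range k, x i) ∧ ∑ i ∈ range m, x i ≤ 0 := by
  refine and_congr (forall₂_congr fun k hk => ?_) ?_
  · rw [partialSum_initialSegment x hk.2.le]
  · rw [partialSum_initialSegment x le_rfl]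

lemma eq_of_initialSegment_mem_firstLadderEpochSet {m m' : ℕ}
    (h : (fun i : Fin (m + 1) => x i) ∈ firstLadderEpochSet (m + 1) (m + 1))
    (h' : (fun i : Fin (m' + 1) => x i) ∈ firstLadderEpochSet (m' + 1) (m' + 1)) : m = m' := by
  rw [initialSegment_mem_firstLadderEpochSet_iff] at h h'
  by_contra hne
  rcases Nat.lt_or_gt_of_ne hne with hlt | hlt
  · linarith [h.2, h'.1 (m + 1) ⟨by omega, by omega⟩]
  · linarith [h'.2, h.1 (m' + 1) ⟨by omega, by omega⟩]

lemma tsum_indicator_firstLadderEpochSet_eq {γ : ℝ} {m : ℕ}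
    (h : (fun i : Fin (m + 1) => x i) ∈ firstLadderEpochSet (m + 1) (m + 1)) :
    ∑' m', (firstLadderEpochSet (m' + 1) (m' + 1)).indicator (expWeight γ)
      (fun i : Fin (m' + 1) => x i) = expWeight γ (fun i : Fin (m + 1) => x i) := by
  rw [tsum_eq_single m fun m' hm' => Set.indicator_of_notMem
    (fun h' => hm' (eq_of_initialSegment_mem_firstLadderEpochSet x h h').symm) _,
    Set.indicator_of_mem h]

lemma tsum_indicator_firstLadderEpochSet_le_one {γ : ℝ} (hγ : 0 ≤ γ) :
    ∑' m, (firstLadderEpochSet (m + 1) (m + 1)).indicator (expWeight γ)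
      (fun i : Fin (m + 1) => x i) ≤ 1 := by
  by_cases h : ∃ m, (fun i : Fin (m + 1) => x i) ∈ firstLadderEpochSet (m + 1) (m + 1)
  · obtain ⟨m, hm⟩ := h
    rw [tsum_indicator_firstLadderEpochSet_eq x hm]
    exact expWeight_le_one hγ hm.2
  · simp only [not_exists] at h
    simp [Set.indicator_of_notMem (h _)]

lemma tsum_indicator_firstLadderEpochSet_lt_one {γ : ℝ} (hγ : 0 < γ) (hx : x 0 < 0) :
    ∑' m, (firstLadderEpochSet (m + 1) (m + 1)).indicator (expWeight γ)
      (fun i : Fin (m + 1) => x i) < 1 := by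
  have h0 : (fun i : Fin 1 => x i) ∈ firstLadderEpochSet 1 1 := by
    rw [initialSegment_mem_firstLadderEpochSet_iff]
    simpa using hx.le
  rw [tsum_indicator_firstLadderEpochSet_eq x h0, expWeight, partialSum_initialSegment x le_rfl]
  simpa using mul_neg_of_pos_of_neg hγ hx

lemma sum_Ico_le_tsum_indicator_nonposSet (γ : ℝ) {t : ℕ}
    (ht : ∀ k ∈ Set.Ico 1 t, ∑ i ∈ range k, x i ≤ 0) :
    ∑ n ∈ Ico 1 t, ENNReal.ofReal (Real.exp (γ * ∑ i ∈ range n, x i)) ≤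
      ∑' n, (nonposSet n).indicator (expWeight γ) (fun i : Fin n => x i) := by
  refine le_trans (le_of_eq (sum_congr rfl fun n hn => ?_)) (ENNReal.sum_le_tsum _)
  obtain ⟨-, hnt⟩ := mem_Ico.1 hn
  have hmem : (fun i : Fin n => x i) ∈ nonposSet n := fun k hk => by
    rw [partialSum_initialSegment x hk.2]
    exact ht k ⟨hk.1, hk.2.trans_lt hnt⟩
  rw [Set.indicator_of_mem hmem, expWeight, partialSum_initialSegment x le_rfl]

end Sequence

section IID

variable {Ω : Type*} [MeasurableSpace Ω] {μ : Measure Ω} {X : ℕ → Ω → ℝ}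

lemma measurePreserving_initialSegment (hmeas : ∀ i, Measurable (X i))
    (hindep : iIndepFun X μ) (hident : ∀ i, IdentDistrib (X i) (X 0) μ μ) (n : ℕ) :
    MeasurePreserving (fun ω (i : Fin n) => X i ω) μ (Measure.pi fun _ => μ.map (X 0)) where
  measurable := measurable_pi_lambda _ fun i => hmeas i
  map_eq := by
    rw [(hindep.precomp Fin.val_injective).map_fun_eq_pi_map
      fun i : Fin n => (hmeas i).aemeasurable]
    simp only [(hident _).map_eq]

lemma lintegral_indicator_expWeight_initialSegment (hmeas : ∀ i, Measurable (X i))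
    (hindep : iIndepFun X μ) (hident : ∀ i, IdentDistrib (X i) (X 0) μ μ) {n : ℕ}
    {s : Set (Fin n → ℝ)} (hs : MeasurableSet s) (γ : ℝ) :
    ∫⁻ ω, s.indicator (expWeight γ) (fun i : Fin n => X i ω) ∂μ =
      ∫⁻ x in s, expWeight γ x ∂Measure.pi fun _ => μ.map (X 0) := by
  rw [← lintegral_indicator hs, (measurePreserving_initialSegment hmeas hindep hident n)
    |>.lintegral_comp ((measurable_expWeight γ).indicator hs)]

lemma measurable_indicator_expWeight_initialSegment (hmeas : ∀ i, Measurable (X i)) {n : ℕ}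
    {s : Set (Fin n → ℝ)} (hs : MeasurableSet s) (γ : ℝ) :
    Measurable fun ω => s.indicator (expWeight γ) (fun i : Fin n => X i ω) :=
  ((measurable_expWeight γ).indicator hs).comp (measurable_pi_lambda _ fun i => hmeas i)

lemma tsum_firstLadderMoment_lt_one [IsProbabilityMeasure μ] (hmeas : ∀ i, Measurable (X i))
    (hindep : iIndepFun X μ) (hident : ∀ i, IdentDistrib (X i) (X 0) μ μ)
    (hneg : μ {ω | X 0 ω < 0} ≠ 0) {γ : ℝ} (hγ : 0 < γ) :
    ∑' m, firstLadderMoment (μ.map (X 0)) γ (m + 1) < 1 := by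
  simp_rw [firstLadderMoment, ← lintegral_indicator_expWeight_initialSegment hmeas hindep hident
    (measurableSet_firstLadderEpochSet _ _), ← lintegral_tsum fun m =>
      (measurable_indicator_expWeight_initialSegment hmeas (measurableSet_firstLadderEpochSet _ _)
        γ).aemeasurable]
  have hle (ω : Ω) := tsum_indicator_firstLadderEpochSet_le_one (X · ω) hγ.le
  calc _ < ∫⁻ _, 1 ∂μ :=
        lintegral_strict_mono_of_ae_le_of_ae_lt_on aemeasurable_const
          ((lintegral_mono hle).trans_lt (by simp)).ne (ae_of_all _ hle) hneg
          (ae_of_all _ fun ω hω => tsum_indicator_firstLadderEpochSet_lt_one (X · ω) hγ hω)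
    _ = 1 := by simp

end IID

end RandomWalk

open RandomWalk in
theorem stmt_13 {Ω : Type*} [MeasurableSpace Ω] (μ : Measure Ω) [IsProbabilityMeasure μ]
    (X : ℕ → Ω → ℝ) (hmeas : ∀ i, Measurable (X i))
    (hindep : iIndepFun X μ)
    (hident : ∀ i, IdentDistrib (X i) (X 0) μ μ)
    (hmean : ∫ ω, X 0 ω ∂μ = 0)
    (hint : Integrable (X 0) μ)
    (hnz : ¬ (X 0 =ᵐ[μ] fun _ => 0))
    (S : ℕ → Ω → ℝ) (hS : ∀ n ω, S n ω = ∑ i ∈ Finset.range n, X i ω)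
    (T : Ω → ℕ) (hT : ∀ ω, T ω = sInf {n : ℕ | 1 ≤ n ∧ 0 < S n ω})
    (γ : ℝ) (hγ : 0 < γ) :
    ∫⁻ ω, ∑ n ∈ Finset.Ico 1 (T ω), ENNReal.ofReal (Real.exp (γ * S n ω)) ∂μ < ⊤ := by
  have : IsProbabilityMeasure (μ.map (X 0)) :=
    Measure.isProbabilityMeasure_map (hmeas 0).aemeasurable
  have hbefore (ω : Ω) : ∀ k ∈ Set.Ico 1 (T ω), ∑ i ∈ range k, X i ω ≤ 0 := fun k hk => by
    rw [hT] at hk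
    rw [← hS, ← not_lt]
    exact fun hpos => Nat.notMem_of_lt_sInf hk.2 ⟨hk.1, hpos⟩
  calc _ ≤ ∫⁻ ω, ∑' n, (nonposSet n).indicator (expWeight γ) (fun i : Fin n => X i ω) ∂μ :=
        lintegral_mono fun ω => by
          simpa only [hS] using sum_Ico_le_tsum_indicator_nonposSet (X · ω) γ (hbefore ω)
    _ = ∑' n, ladderMoment (μ.map (X 0)) γ n := by
        rw [lintegral_tsum fun n => (measurable_indicator_expWeight_initialSegment hmeas
          (measurableSet_nonposSet n) γ).aemeasurable]
        simp_rw [lintegral_indicator_expWeight_initialSegment hmeas hindep hident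
          (measurableSet_nonposSet _), setLIntegral_nonposSet_eq_ladderMoment]
    _ ≤ (1 - ∑' m, firstLadderMoment (μ.map (X 0)) γ (m + 1))⁻¹ := tsum_ladderMoment_le _ hγ.le
    _ < ⊤ := ENNReal.inv_lt_top.2 <| tsub_pos_of_lt <| tsum_firstLadderMoment_lt_one hmeas hindep
        hident (measure_neg_ne_zero_of_integral_eq_zero hint hmean hnz) hγ
end
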